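/- For f(z) = (z⁹ + 3z³)/(3z⁶ + 1), the derivative satisfies f′(z) = 9(z−1)²z²(z+1)²(z²−z+1)²(z²+z+1)² / (3z⁶+1)², and in particular f′ has zeros of order exactly 2 at z = 0, 1, and −1. -/

import Mathlib

/-!
On the open set where `3z⁶ + 1 ≠ 0` the quotient rule gives each derivative in closed form, and
on an open set the next iterated derivative is the derivative of that closed form:
`f' = 9z²(z⁶ - 1)²/(3z⁶ + 1)²`, `f'' = 18z(z⁶ - 1)(3z¹² + 22z⁶ - 1)/(3z⁶ + 1)³` and
`f''' = 18(9z²⁴ - 228z¹⁸ + 1006z¹² - 212z⁶ + 1)/(3z⁶ + 1)⁴`.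
The factors `z` and `z⁶ - 1` make `f'` and `f''` vanish at `0` and `±1`, while `f'''` takes the
values `18` at `0` and `81/2` at `±1`.
-/

theorem iteratedDeriv_succ_eq_of_hasDerivAt {𝕜 F : Type*} [NontriviallyNormedField 𝕜]
    [NormedAddCommGroup F] [NormedSpace 𝕜 F] {f g : 𝕜 → F} {U : Set 𝕜} (hU : IsOpen U)
    (hf : ∀ z ∈ U, HasDerivAt f (g z) z) (n : ℕ) {x : 𝕜} (hx : x ∈ U) :
    iteratedDeriv (n + 1) f x = iteratedDeriv n g x := by
  rw [iteratedDeriv_succ']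
  exact Set.EqOn.iteratedDeriv_of_isOpen (fun z hz => (hf z hz).deriv) hU n hx

theorem HasDerivAt.div_pow {𝕜 : Type*} [NontriviallyNormedField 𝕜] {p q : 𝕜 → 𝕜} {p' q' z : 𝕜}
    (hp : HasDerivAt p p' z) (hq : HasDerivAt q q' z) (hz : q z ≠ 0) (k : ℕ) :
    HasDerivAt (fun w => p w / q w ^ k) ((p' * q z - k * p z * q') / q z ^ (k + 1)) z := by
  refine (hp.div (hq.fun_pow k) (pow_ne_zero k hz)).congr_deriv ?_
  rcases k with _ | k
  · simp [hz]
  · field_simp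
    push_cast
    ring

namespace ShorDecoder

noncomputable def f (z : ℂ) : ℂ := (z ^ 9 + 3 * z ^ 3) / (3 * z ^ 6 + 1)

noncomputable def f' (z : ℂ) : ℂ := (9 * z ^ 14 - 18 * z ^ 8 + 9 * z ^ 2) / (3 * z ^ 6 + 1) ^ 2

noncomputable def f'' (z : ℂ) : ℂ :=
  (54 * z ^ 19 + 342 * z ^ 13 - 414 * z ^ 7 + 18 * z) / (3 * z ^ 6 + 1) ^ 3

noncomputable def f''' (z : ℂ) : ℂ :=
  (162 * z ^ 24 - 4104 * z ^ 18 + 18108 * z ^ 12 - 3816 * z ^ 6 + 18) / (3 * z ^ 6 + 1) ^ 4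

def regularSet : Set ℂ := {z | 3 * z ^ 6 + 1 ≠ 0}

theorem isOpen_regularSet : IsOpen regularSet :=
  isOpen_ne_fun (by fun_prop) continuous_const

theorem hasDerivAt_denom (z : ℂ) : HasDerivAt (fun w : ℂ => 3 * w ^ 6 + 1) (18 * z ^ 5) z :=
  (((hasDerivAt_pow 6 z).const_mul 3).add_const 1).congr_deriv (by push_cast; ring)

theorem hasDerivAt_f : ∀ z ∈ regularSet, HasDerivAt f (f' z) z := fun z hz =>
  ((hasDerivAt_pow 9 z).add ((hasDerivAt_pow 3 z).const_mul 3) |>.div (hasDerivAt_denom z)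
    hz).congr_deriv (by simp only [f', Pi.add_apply]; push_cast; ring)

theorem hasDerivAt_f' : ∀ z ∈ regularSet, HasDerivAt f' (f'' z) z := fun z hz =>
  ((((hasDerivAt_pow 14 z).const_mul 9).sub ((hasDerivAt_pow 8 z).const_mul 18)).add
      ((hasDerivAt_pow 2 z).const_mul 9) |>.div_pow (hasDerivAt_denom z) hz 2).congr_deriv
    (by simp only [f'', Pi.add_apply, Pi.sub_apply]; push_cast; ring)

theorem hasDerivAt_f'' : ∀ z ∈ regularSet, HasDerivAt f'' (f''' z) z := fun z hz =>
  (((((hasDerivAt_pow 19 z).const_mul 54).add ((hasDerivAt_pow 13 z).const_mul 342)).sub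
      ((hasDerivAt_pow 7 z).const_mul 414)).add ((hasDerivAt_id z).const_mul 18)
    |>.div_pow (hasDerivAt_denom z) hz 3).congr_deriv
    (by simp only [f''', Pi.add_apply, Pi.sub_apply, id]; push_cast; ring)

theorem iteratedDeriv_f {z : ℂ} (hz : z ∈ regularSet) :
    iteratedDeriv 1 f z = f' z ∧ iteratedDeriv 2 f z = f'' z ∧ iteratedDeriv 3 f z = f''' z := by
  have d0 := iteratedDeriv_succ_eq_of_hasDerivAt isOpen_regularSet hasDerivAt_f
  have d1 := iteratedDeriv_succ_eq_of_hasDerivAt isOpen_regularSet hasDerivAt_f'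
  have d2 := iteratedDeriv_succ_eq_of_hasDerivAt isOpen_regularSet hasDerivAt_f''
  exact ⟨by rw [d0 0 hz, iteratedDeriv_zero], by rw [d0 1 hz, d1 0 hz, iteratedDeriv_zero],
    by rw [d0 2 hz, d1 1 hz, d2 0 hz, iteratedDeriv_zero]⟩

end ShorDecoder

open ShorDecoder in
/-- For `f(z) = (z⁹ + 3z³)/(3z⁶ + 1)` (the Shor code meromorphic decoder),
`f′(z) = 9(z−1)²z²(z+1)²(z²−z+1)²(z²+z+1)²/(3z⁶+1)²`, and `f′` has zeros of
order exactly `2` at `z = 0, 1, −1`. -/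
theorem stmt_11 :
    (∀ z : ℂ, 3 * z ^ 6 + 1 ≠ 0 →
      HasDerivAt (fun z : ℂ => (z ^ 9 + 3 * z ^ 3) / (3 * z ^ 6 + 1))
        (9 * (z - 1) ^ 2 * z ^ 2 * (z + 1) ^ 2 * (z ^ 2 - z + 1) ^ 2 *
          (z ^ 2 + z + 1) ^ 2 / (3 * z ^ 6 + 1) ^ 2) z) ∧
    (∀ c : ℂ, c = 0 ∨ c = 1 ∨ c = -1 →
      iteratedDeriv 1 (fun z : ℂ => (z ^ 9 + 3 * z ^ 3) / (3 * z ^ 6 + 1)) c = 0 ∧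
      iteratedDeriv 2 (fun z : ℂ => (z ^ 9 + 3 * z ^ 3) / (3 * z ^ 6 + 1)) c = 0 ∧
      iteratedDeriv 3 (fun z : ℂ => (z ^ 9 + 3 * z ^ 3) / (3 * z ^ 6 + 1)) c ≠ 0) := by
  refine ⟨fun z hz => (hasDerivAt_f z hz).congr_deriv (by unfold f'; ring), fun c hc => ?_⟩
  have hc_regular : c ∈ regularSet := by
    rcases hc with rfl | rfl | rfl <;> norm_num [regularSet]
  obtain ⟨h1, h2, h3⟩ := iteratedDeriv_f hc_regular
  refine ⟨h1.trans ?_, h2.trans ?_, h3.trans_ne ?_⟩ <;>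
    rcases hc with rfl | rfl | rfl <;> norm_num [f', f'', f''']
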